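/- The Fisher information of the posterior family equals the proxy score covariance: for every x ∈ ℝ^D and all i, j ∈ {1, …, D}, Σ_{m=1}^M w_m(x) · (∂/∂x_i log w_m(x)) · (∂/∂x_j log w_m(x)) = C_{ij}(x). -/

import Mathlib

open Matrix MeasureTheory BigOperators

/-- Partial derivative of a scalar function on `ℝ^D` in coordinate `i`. -/
noncomputable def pderiv' {D : ℕ} (i : Fin D) (f : (Fin D → ℝ) → ℝ) (x : Fin D → ℝ) : ℝ :=
  deriv (fun t => f (Function.update x i t)) (x i)

/-- Multivariate Gaussian density `N(x; m, S)`. -/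
noncomputable def gaussDensity {D : ℕ} (S : Matrix (Fin D) (Fin D) ℝ) (m x : Fin D → ℝ) : ℝ :=
  ((2 * Real.pi) ^ D * S.det) ^ (-(1/2) : ℝ) *
    Real.exp (-((x - m) ⬝ᵥ S⁻¹.mulVec (x - m)) / 2)

/-- Noise-corrupted marginal `p(x) = (1/M) ∑ₘ N(x; α μₘ, S)`. -/
noncomputable def marginal {D M : ℕ} (μ : Fin M → Fin D → ℝ) (α : ℝ)
    (S : Matrix (Fin D) (Fin D) ℝ) (x : Fin D → ℝ) : ℝ :=
  (M : ℝ)⁻¹ * ∑ m, gaussDensity S (α • μ m) x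

/-- The score `s(x) = ∇ₓ log p(x)`. -/
noncomputable def score {D M : ℕ} (μ : Fin M → Fin D → ℝ) (α : ℝ)
    (S : Matrix (Fin D) (Fin D) ℝ) (x : Fin D → ℝ) : Fin D → ℝ :=
  fun i => pderiv' i (fun y => Real.log (marginal μ α S y)) x

/-- The proxy score `s̃(x; x₀) = S⁻¹ (α x₀ − x)`. -/
noncomputable def proxyScore {D : ℕ} (α : ℝ) (S : Matrix (Fin D) (Fin D) ℝ)
    (x x₀ : Fin D → ℝ) : Fin D → ℝ :=
  S⁻¹.mulVec (α • x₀ - x)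

/-- Posterior weights `wₘ(x) = N(x; α μₘ, S) / ∑ₘ' N(x; α μₘ', S)`. -/
noncomputable def postW {D M : ℕ} (μ : Fin M → Fin D → ℝ) (α : ℝ)
    (S : Matrix (Fin D) (Fin D) ℝ) (m : Fin M) (x : Fin D → ℝ) : ℝ :=
  gaussDensity S (α • μ m) x / ∑ m', gaussDensity S (α • μ m') x


/-- Proxy score covariance `C(x) = ∑ₘ wₘ(x) s̃(x;μₘ) s̃(x;μₘ)ᵀ − s(x) s(x)ᵀ`. -/
noncomputable def proxyCov {D M : ℕ} (μ : Fin M → Fin D → ℝ) (α : ℝ)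
    (S : Matrix (Fin D) (Fin D) ℝ) (x : Fin D → ℝ) : Matrix (Fin D) (Fin D) ℝ :=
  Matrix.of fun i j =>
    (∑ m, postW μ α S m x * (proxyScore α S x (μ m) i * proxyScore α S x (μ m) j)) -
      score μ α S x i * score μ α S x j

/- ### Auxiliary lemmas -/

lemma update_hasDerivAt {D : ℕ} (x c : Fin D → ℝ) (i k : Fin D) :
    HasDerivAt (fun t => Function.update x i t k - c k) (if k = i then 1 else 0) (x i) := by
  rcases eq_or_ne k i with h | h
  · subst h
    simp only [Function.update_self, if_pos rfl]
    exact (hasDerivAt_id (x k)).sub_const (c k)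
  · simp only [Function.update_of_ne h, if_neg h]
    exact hasDerivAt_const _ _

lemma quad_hasDerivAt {D : ℕ} (A : Matrix (Fin D) (Fin D) ℝ) (hA : Aᵀ = A)
    (c x : Fin D → ℝ) (i : Fin D) :
    HasDerivAt (fun t => (Function.update x i t - c) ⬝ᵥ A.mulVec (Function.update x i t - c))
      (2 * A.mulVec (x - c) i) (x i) := by
  have hfun : (fun t => (Function.update x i t - c) ⬝ᵥ A.mulVec (Function.update x i t - c))
      = fun t => ∑ k, ∑ l, (Function.update x i t k - c k) * (A k l * (Function.update x i t l - c l)) := by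
    funext t
    simp [dotProduct, Matrix.mulVec, Finset.mul_sum, Pi.sub_apply]
  rw [hfun]
  have h : HasDerivAt (fun t => ∑ k, ∑ l, (Function.update x i t k - c k) * (A k l * (Function.update x i t l - c l)))
      (∑ k, ∑ l, ((if k = i then (1:ℝ) else 0) * (A k l * (x l - c l))
        + (x k - c k) * (A k l * (if l = i then (1:ℝ) else 0)))) (x i) := by
    apply HasDerivAt.fun_sum
    intro k _
    apply HasDerivAt.fun_sum
    intro l _
    have hk := update_hasDerivAt x c i k
    have hl := (update_hasDerivAt x c i l).const_mul (A k l)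
    have := hk.fun_mul hl
    simpa [Function.update_eq_self] using this
  convert h using 1
  have hsym : ∀ k, A k i = A i k := by
    intro k; rw [← congrFun (congrFun hA i) k, Matrix.transpose_apply]
  simp only [ite_mul, mul_ite, one_mul, mul_one, mul_zero, zero_mul,
    Finset.sum_add_distrib, Finset.sum_ite_eq', Finset.mem_univ, if_pos]
  simp only [Matrix.mulVec, dotProduct, Pi.sub_apply]
  have hrw : ∀ k : Fin D, (∑ l, if k = i then A k l * (x l - c l) else 0)
      = if k = i then ∑ l, A k l * (x l - c l) else 0 := by
    intro k; split <;> simp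
  rw [Finset.sum_congr rfl fun k _ => hrw k, Finset.sum_ite_eq' Finset.univ i]
  simp only [Finset.mem_univ, if_pos]
  have h2 : (∑ k, (x k - c k) * A k i) = ∑ k, A i k * (x k - c k) :=
    Finset.sum_congr rfl fun k _ => by rw [hsym k, mul_comm]
  rw [h2]; ring

lemma gaussDensity_pos {D : ℕ} {S : Matrix (Fin D) (Fin D) ℝ} (hS : S.PosDef)
    (c x : Fin D → ℝ) : 0 < gaussDensity S c x := by
  apply mul_pos _ (Real.exp_pos _)
  apply Real.rpow_pos_of_pos
  exact mul_pos (pow_pos (by positivity) D) hS.det_pos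

lemma sinv_symm {D : ℕ} {S : Matrix (Fin D) (Fin D) ℝ} (hS : S.PosDef) : (S⁻¹)ᵀ = S⁻¹ := by
  have h := hS.1.inv
  simpa [Matrix.IsHermitian, Matrix.conjTranspose_eq_transpose_of_trivial] using h

lemma gauss_hasDerivAt {D : ℕ} {S : Matrix (Fin D) (Fin D) ℝ} (hS : S.PosDef)
    (c x : Fin D → ℝ) (i : Fin D) :
    HasDerivAt (fun t => gaussDensity S c (Function.update x i t))
      (gaussDensity S c x * S⁻¹.mulVec (c - x) i) (x i) := by
  have hq := quad_hasDerivAt S⁻¹ (sinv_symm hS) c x i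
  have h := ((hq.fun_neg.div_const 2).exp).const_mul (((2 * Real.pi) ^ D * S.det) ^ (-(1/2) : ℝ))
  have hcollapse : Function.update x i (x i) = x := Function.update_eq_self i x
  have hneg : S⁻¹.mulVec (c - x) i = -(S⁻¹.mulVec (x - c) i) := by
    rw [show c - x = -(x - c) by ring, Matrix.mulVec_neg]; simp
  have hfun : (fun t => gaussDensity S c (Function.update x i t))
      = fun t => ((2 * Real.pi) ^ D * S.det) ^ (-(1/2) : ℝ) *
        Real.exp (-((Function.update x i t - c) ⬝ᵥ S⁻¹.mulVec (Function.update x i t - c)) / 2) := by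
    funext t; simp [gaussDensity]
  rw [hfun]
  convert h using 1
  · rfl
  · rfl
  simp only [gaussDensity, hcollapse, hneg]
  ring

/-- the Fisher information of the posterior family equals the proxy score
covariance: `∑ₘ wₘ(x) ∂ᵢ log wₘ(x) ∂ⱼ log wₘ(x) = Cᵢⱼ(x)`. -/
theorem fisher_info_eq_proxyCov {D M : ℕ} (hD : 1 ≤ D) (hM : 1 ≤ M)
    (μ : Fin M → Fin D → ℝ) (α : ℝ) (hα : 0 < α)
    (S : Matrix (Fin D) (Fin D) ℝ) (hS : S.PosDef) :
    ∀ (x : Fin D → ℝ) (i j : Fin D),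
      (∑ m, postW μ α S m x *
          (pderiv' i (fun y => Real.log (postW μ α S m y)) x *
            pderiv' j (fun y => Real.log (postW μ α S m y)) x)) =
        proxyCov μ α S x i j := by
  intro x i j
  haveI : Nonempty (Fin M) := Fin.pos_iff_nonempty.mp (by omega)
  have hg : ∀ (m : Fin M) (y : Fin D → ℝ), 0 < gaussDensity S (α • μ m) y :=
    fun m y => gaussDensity_pos hS _ y
  have hT : ∀ y : Fin D → ℝ, 0 < ∑ m, gaussDensity S (α • μ m) y :=
    fun y => Finset.sum_pos (fun m _ => hg m y) Finset.univ_nonempty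
  -- derivative of log of a single Gaussian
  have hds : ∀ (k : Fin D) (m : Fin M),
      HasDerivAt (fun t => Real.log (gaussDensity S (α • μ m) (Function.update x k t)))
        (proxyScore α S x (μ m) k) (x k) := by
    intro k m
    have h := (gauss_hasDerivAt hS (α • μ m) x k).log (ne_of_gt (hg m _))
    simp only [Function.update_eq_self] at h
    have he : gaussDensity S (α • μ m) x * S⁻¹.mulVec (α • μ m - x) k / gaussDensity S (α • μ m) x
        = proxyScore α S x (μ m) k := by
      rw [proxyScore, mul_comm, mul_div_assoc, div_self (ne_of_gt (hg m x)), mul_one]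
    rwa [he] at h
  -- derivative of log of the sum of Gaussians
  have hdT : ∀ k : Fin D,
      HasDerivAt (fun t => Real.log (∑ m, gaussDensity S (α • μ m) (Function.update x k t)))
        ((∑ m, gaussDensity S (α • μ m) x * proxyScore α S x (μ m) k) /
          (∑ m, gaussDensity S (α • μ m) x)) (x k) := by
    intro k
    have hsum : HasDerivAt (fun t => ∑ m, gaussDensity S (α • μ m) (Function.update x k t))
        (∑ m, gaussDensity S (α • μ m) x * proxyScore α S x (μ m) k) (x k) := by
      apply HasDerivAt.fun_sum
      intro m _
      simpa only [proxyScore] using gauss_hasDerivAt hS (α • μ m) x k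
    have h := hsum.log (ne_of_gt (hT (Function.update x k (x k))))
    simpa only [Function.update_eq_self] using h
  -- score in terms of the Gaussian sum
  have hscoreT : ∀ k : Fin D, score μ α S x k =
      (∑ m, gaussDensity S (α • μ m) x * proxyScore α S x (μ m) k) /
        (∑ m, gaussDensity S (α • μ m) x) := by
    intro k
    have hfun : (fun t => Real.log (marginal μ α S (Function.update x k t)))
        = fun t => Real.log ((M:ℝ)⁻¹) +
            Real.log (∑ m, gaussDensity S (α • μ m) (Function.update x k t)) := by
      funext t
      rw [marginal, Real.log_mul (by positivity) (ne_of_gt (hT _))]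
    show pderiv' k (fun y => Real.log (marginal μ α S y)) x = _
    unfold pderiv'
    rw [hfun]
    exact ((hdT k).const_add (Real.log ((M:ℝ)⁻¹))).deriv
  -- derivative of the log posterior weight
  have hlogw : ∀ (k : Fin D) (m : Fin M),
      pderiv' k (fun y => Real.log (postW μ α S m y)) x =
        proxyScore α S x (μ m) k - score μ α S x k := by
    intro k m
    have hfun : (fun t => Real.log (postW μ α S m (Function.update x k t)))
        = fun t => Real.log (gaussDensity S (α • μ m) (Function.update x k t)) -
            Real.log (∑ m', gaussDensity S (α • μ m') (Function.update x k t)) := by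
      funext t
      rw [postW, Real.log_div (ne_of_gt (hg m _)) (ne_of_gt (hT _))]
    unfold pderiv'
    rw [hfun, hscoreT k]
    exact ((hds k m).sub (hdT k)).deriv
  -- score as weighted sum of proxy scores
  have hscore : ∀ k : Fin D, score μ α S x k =
      ∑ m, postW μ α S m x * proxyScore α S x (μ m) k := by
    intro k
    rw [hscoreT k, Finset.sum_div]
    exact Finset.sum_congr rfl fun m _ => by rw [postW, div_mul_eq_mul_div]
  have hW1 : (∑ m, postW μ α S m x) = 1 := by
    simp only [postW]
    rw [← Finset.sum_div, div_self (ne_of_gt (hT x))]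
  -- final algebra
  simp only [proxyCov, Matrix.of_apply]
  rw [Finset.sum_congr rfl fun m _ => by rw [hlogw i m, hlogw j m]]
  set si := score μ α S x i with hsi
  set sj := score μ α S x j with hsj
  set w : Fin M → ℝ := fun m => postW μ α S m x with hw
  set a : Fin M → ℝ := fun m => proxyScore α S x (μ m) i with ha
  set b : Fin M → ℝ := fun m => proxyScore α S x (μ m) j with hb
  have h2 : ∑ m, w m * a m = si := (hscore i).symm
  have h3 : ∑ m, w m * b m = sj := (hscore j).symm
  calc ∑ m, w m * ((a m - si) * (b m - sj))
      = ∑ m, (w m * (a m * b m) - (w m * a m) * sj - (w m * b m) * si + w m * (si * sj)) := by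
        apply Finset.sum_congr rfl; intro m _; ring
    _ = (∑ m, w m * (a m * b m)) - (∑ m, w m * a m) * sj - (∑ m, w m * b m) * si
          + (∑ m, w m) * (si * sj) := by
        rw [Finset.sum_add_distrib, Finset.sum_sub_distrib, Finset.sum_sub_distrib,
          ← Finset.sum_mul, ← Finset.sum_mul, ← Finset.sum_mul]
    _ = (∑ m, w m * (a m * b m)) - si * sj := by
        rw [h2, h3, hW1]; ring
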